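/- Let r: I → (0, ∞) be 1-Lipschitz on a compact interval I and g: I → [0,∞) integrable, and let J ⊆ I be a subinterval such that [t - r(t)/2, t + r(t)/2] ⊆ I for all t ∈ J. Then ∫_J (1/r(t)) ∫_{t - r(t)/2}^{t + r(t)/2} g(s) ds dt ≤ 4 ∫_I g(s) ds. -/

import Mathlib

open MeasureTheory Set

open scoped ENNReal

/-! Extend `r` from `[a, b]` to a `1`-Lipschitz function on `ℝ` and pass to lower integrals, where
Tonelli lets us integrate the kernel `k(t, s) = g(s) / r(t)`, supported on `|s - t| ≤ r(t) / 2`,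
first in `t`. On that support the Lipschitz bound gives `r(t) ≤ 2 r(s)` and `r(s) ≤ 2 r(t)`,
so `|t - s| ≤ r(s)` and `1 / r(t) ≤ 2 / r(s)`: the `t`-integral is at most
`(2 / r(s)) · 2 r(s) · g(s) = 4 g(s)`. -/

theorem LipschitzWith.le_two_mul_of_abs_sub_le_half {ρ : ℝ → ℝ} (hρ : LipschitzWith 1 ρ)
    {s t : ℝ} (h : |s - t| ≤ ρ t / 2) : ρ t ≤ 2 * ρ s ∧ ρ s ≤ 2 * ρ t := by
  have hdist : |ρ s - ρ t| ≤ |s - t| := by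
    simpa [Real.dist_eq] using hρ.dist_le_mul s t
  have := abs_le.1 (hdist.trans h)
  constructor <;> linarith [abs_nonneg (s - t)]

theorem ofReal_two_div_mul_volume_Icc_le (s x : ℝ) :
    ENNReal.ofReal (2 / x) * volume (Icc (s - x) (s + x)) ≤ 4 := by
  rcases le_or_gt x 0 with hx | hx
  · simp [ENNReal.ofReal_of_nonpos (div_nonpos_of_nonneg_of_nonpos zero_le_two hx)]
  · rw [Real.volume_Icc, ← ENNReal.ofReal_mul (by positivity),
      show 2 / x * (s + x - (s - x)) = 4 by field_simp; ring]
    simp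

theorem ofReal_intervalIntegral_eq_setLIntegral_ofReal {g : ℝ → ℝ} {u v : ℝ} (huv : u ≤ v)
    (hgi : IntegrableOn g (Ioc u v)) (hg : 0 ≤ᵐ[volume.restrict (Ioc u v)] g) :
    ENNReal.ofReal (∫ s in u..v, g s) = ∫⁻ s in Ioc u v, ENNReal.ofReal (g s) := by
  rw [intervalIntegral.integral_of_le huv, ofReal_integral_eq_lintegral_ofReal hgi hg]

theorem enorm_mul_intervalIntegral_eq_setLIntegral_indicator {g : ℝ → ℝ} {S : Set ℝ}
    {x u v : ℝ} (hx : 0 ≤ x) (huv : u ≤ v) (hsub : Ioc u v ⊆ S) (hgi : IntegrableOn g S)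
    (hg : ∀ s, 0 ≤ g s) :
    ‖x * ∫ s in u..v, g s‖ₑ =
      ENNReal.ofReal x * ∫⁻ s in Ioc u v, S.indicator (fun s => ENNReal.ofReal (g s)) s := by
  rw [Real.enorm_of_nonneg (mul_nonneg hx (intervalIntegral.integral_nonneg huv fun s _ => hg s)),
    ENNReal.ofReal_mul hx,
    ofReal_intervalIntegral_eq_setLIntegral_ofReal huv (hgi.mono_set hsub) (ae_of_all _ hg),
    setLIntegral_congr_fun measurableSet_Ioc fun s hs => indicator_of_mem (hsub hs) _]

section Averaging

variable {ρ : ℝ → ℝ} {G : ℝ → ℝ≥0∞}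

theorem indicator_Ioc_half_le_indicator_Icc (hρ : LipschitzWith 1 ρ) (t s : ℝ) :
    (Ioc (t - ρ t / 2) (t + ρ t / 2)).indicator (fun s => ENNReal.ofReal (1 / ρ t) * G s) s ≤
      (Icc (s - ρ s) (s + ρ s)).indicator (fun _ => ENNReal.ofReal (2 / ρ s) * G s) t := by
  by_cases hs : s ∈ Ioc (t - ρ t / 2) (t + ρ t / 2)
  · have hst : |s - t| ≤ ρ t / 2 := abs_le.2 ⟨by linarith [hs.1], by linarith [hs.2]⟩
    obtain ⟨hρts, hρst⟩ := hρ.le_two_mul_of_abs_sub_le_half hst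
    have hρt : 0 < ρ t := by linarith [hs.1, hs.2]
    have ht : t ∈ Icc (s - ρ s) (s + ρ s) :=
      ⟨by linarith [(abs_le.1 hst).2], by linarith [(abs_le.1 hst).1]⟩
    rw [indicator_of_mem hs, indicator_of_mem ht]
    exact mul_le_mul_left
      (ENNReal.ofReal_le_ofReal ((div_le_div_iff₀ hρt (by linarith)).2 (by linarith))) _
  · simp [indicator_of_notMem hs]

theorem lintegral_indicator_Ioc_half_le (hρ : LipschitzWith 1 ρ) (s : ℝ) :
    ∫⁻ t, (Ioc (t - ρ t / 2) (t + ρ t / 2)).indicator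
      (fun s => ENNReal.ofReal (1 / ρ t) * G s) s ≤ 4 * G s :=
  calc
    _ ≤ ∫⁻ t, (Icc (s - ρ s) (s + ρ s)).indicator (fun _ => ENNReal.ofReal (2 / ρ s) * G s) t :=
      lintegral_mono fun t => indicator_Ioc_half_le_indicator_Icc hρ t s
    _ = ENNReal.ofReal (2 / ρ s) * volume (Icc (s - ρ s) (s + ρ s)) * G s := by
      rw [lintegral_indicator_const measurableSet_Icc, mul_right_comm]
    _ ≤ 4 * G s := by
      gcongr
      exact ofReal_two_div_mul_volume_Icc_le s (ρ s)

theorem lintegral_one_div_mul_setLIntegral_Ioc_half_le (hρ : LipschitzWith 1 ρ)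
    (hG : AEMeasurable G) :
    ∫⁻ t, ENNReal.ofReal (1 / ρ t) * ∫⁻ s in Ioc (t - ρ t / 2) (t + ρ t / 2), G s ≤
      4 * ∫⁻ s, G s := by
  set K : ℝ → ℝ → ℝ≥0∞ := fun t s =>
    (Ioc (t - ρ t / 2) (t + ρ t / 2)).indicator (fun s => ENNReal.ofReal (1 / ρ t) * G s) s
  have hK : AEMeasurable (Function.uncurry K) (volume.prod volume) := by
    have hρm := hρ.continuous.measurable
    refine AEMeasurable.indicator
      (s := {p : ℝ × ℝ | p.1 - ρ p.1 / 2 < p.2} ∩ {p | p.2 ≤ p.1 + ρ p.1 / 2})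
      ((Measurable.ennreal_ofReal (by fun_prop)).aemeasurable.mul
        (hG.comp_quasiMeasurePreserving Measure.quasiMeasurePreserving_snd)) ?_
    exact (measurableSet_lt (by fun_prop) measurable_snd).inter
      (measurableSet_le measurable_snd (by fun_prop))
  calc
    _ = ∫⁻ t, ∫⁻ s, K t s := by
      congr 1 with t
      rw [lintegral_indicator measurableSet_Ioc, lintegral_const_mul' _ _ ENNReal.ofReal_ne_top]
    _ = ∫⁻ s, ∫⁻ t, K t s := lintegral_lintegral_swap hK
    _ ≤ ∫⁻ s, 4 * G s := lintegral_mono fun s => lintegral_indicator_Ioc_half_le hρ s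
    _ = 4 * ∫⁻ s, G s := lintegral_const_mul' _ _ (by norm_num)

end Averaging

/-- Averaging bound: if `r` is a positive `1`-Lipschitz function on a compact
interval `I = [a,b]`, `g ≥ 0` is integrable on `I`, and `J = [c,d] ⊆ I` is a
subinterval with `[t - r(t)/2, t + r(t)/2] ⊆ I` for all `t ∈ J`, then
`∫_J (1/r(t)) ∫_{t-r(t)/2}^{t+r(t)/2} g(s) ds dt ≤ 4 ∫_I g(s) ds`. -/
theorem averaging_fubini_bound (a b c d : ℝ) (hab : a ≤ b) (hcd : c ≤ d)
    (hJ : Set.Icc c d ⊆ Set.Icc a b)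
    (r : ℝ → ℝ) (hrpos : ∀ t ∈ Set.Icc a b, 0 < r t)
    (hlip : ∀ t₁ ∈ Set.Icc a b, ∀ t₂ ∈ Set.Icc a b, |r t₁ - r t₂| ≤ |t₁ - t₂|)
    (g : ℝ → ℝ) (hg : ∀ s, 0 ≤ g s)
    (hgint : IntervalIntegrable g volume a b)
    (hincl : ∀ t ∈ Set.Icc c d, Set.Icc (t - r t / 2) (t + r t / 2) ⊆ Set.Icc a b) :
    (∫ t in c..d, (1 / r t) * ∫ s in (t - r t / 2)..(t + r t / 2), g s)
      ≤ 4 * ∫ s in a..b, g s := by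
  obtain ⟨R, hR, hrR⟩ := (LipschitzOnWith.mk_one hlip).extend_real
  set G := (Ioc a b).indicator fun s => ENNReal.ofReal (g s)
  have hG : AEMeasurable G :=
    (aemeasurable_indicator_iff measurableSet_Ioc).2 hgint.1.aemeasurable.ennreal_ofReal
  have hG_total : ∫⁻ s, G s = ENNReal.ofReal (∫ s in a..b, g s) := by
    rw [lintegral_indicator measurableSet_Ioc,
      ofReal_intervalIntegral_eq_setLIntegral_ofReal hab hgint.1 (ae_of_all _ fun s => hg s)]
  have hinner : ∀ t ∈ Icc c d, ‖(1 / r t) * ∫ s in (t - r t / 2)..(t + r t / 2), g s‖ₑ =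
      ENNReal.ofReal (1 / R t) * ∫⁻ s in Ioc (t - R t / 2) (t + R t / 2), G s := by
    intro t ht
    have hrt := hrpos t (hJ ht)
    have hle : t - r t / 2 ≤ t + r t / 2 := by linarith
    rw [← hrR (hJ ht)]
    exact enorm_mul_intervalIntegral_eq_setLIntegral_indicator (by positivity) hle
      (Ioc_subset_Ioc (hincl t ht (left_mem_Icc.2 hle)).1 (hincl t ht (right_mem_Icc.2 hle)).2)
      hgint.1 hg
  rw [← ENNReal.ofReal_le_ofReal_iff
    (mul_nonneg zero_le_four (intervalIntegral.integral_nonneg hab fun s _ => hg s)),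
    intervalIntegral.integral_of_le hcd]
  -- `ofReal ∫ f ≤ ∫⁻ ‖f‖ₑ` needs no integrability of the outer integrand.
  calc
    _ ≤ ∫⁻ t in Ioc c d, ‖(1 / r t) * ∫ s in (t - r t / 2)..(t + r t / 2), g s‖ₑ :=
      (Real.ofReal_le_enorm _).trans (enorm_integral_le_lintegral_enorm _)
    _ = ∫⁻ t in Ioc c d, ENNReal.ofReal (1 / R t) * ∫⁻ s in Ioc (t - R t / 2) (t + R t / 2), G s :=
      setLIntegral_congr_fun measurableSet_Ioc fun t ht => hinner t (Ioc_subset_Icc_self ht)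
    _ ≤ 4 * ∫⁻ s, G s :=
      (setLIntegral_le_lintegral _ _).trans (lintegral_one_div_mul_setLIntegral_Ioc_half_le hR hG)
    _ = ENNReal.ofReal (4 * ∫ s in a..b, g s) := by
      rw [hG_total, ENNReal.ofReal_mul zero_le_four, ENNReal.ofReal_ofNat]
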